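/- arXiv:2204.13502 — 7 statements merged into one kernel-verified Lean document; each statement's English description precedes it below -/
import Mathlib

section
/- The assignment profile a* that assigns m_1 players to arm 1, m_2 players to arm 2, ..., and the remaining players to arm L (where L = min{l : sum_{k=1}^l m_k >= M}) maximizes f(a) = sum_{k=1}^K min(a_k, m_k) * mu_k over all assignment profiles a in N^K with sum_k a_k = M, given that mu_1 > mu_2 > ... > mu_K > 0. -/
/-- Extend a `ℕ`-valued function on `Fin K` to `ℕ` by zero. -/
def extN (K : ℕ) (f : Fin K → ℕ) : ℕ → ℕ := fun n => if h : n < K then f ⟨n, h⟩ else 0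

/-- Extend an `ℝ`-valued function on `Fin K` to `ℕ` by zero. -/
def extR (K : ℕ) (f : Fin K → ℝ) : ℕ → ℝ := fun n => if h : n < K then f ⟨n, h⟩ else 0

/-- Abel summation by parts. -/
lemma abel_sum (b g : ℕ → ℝ) : ∀ n, ∑ k ∈ Finset.range n, b k * g k =
    ∑ k ∈ Finset.range n, (∑ j ∈ Finset.range (k+1), b j) * (g k - g (k+1)) +
      (∑ j ∈ Finset.range n, b j) * g n := by
  intro n
  induction n with
  | zero => simp
  | succ n ih =>
    rw [Finset.sum_range_succ,
      Finset.sum_range_succ (f := fun k => (∑ j ∈ Finset.range (k+1), b j) * (g k - g (k+1))),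
      Finset.sum_range_succ (f := b), ih]
    ring

lemma filter_sum_eq (K : ℕ) (m : Fin K → ℕ) (k : Fin K) :
    ∑ j ∈ Finset.univ.filter (fun j => j < k), m j =
      ∑ j ∈ Finset.range k.val, extN K m j := by
  rw [Finset.sum_filter]
  have h1 : ∀ j : Fin K, (if j < k then m j else 0) =
      (fun n => if n < k.val then extN K m n else 0) j.val := by
    intro j
    simp only [Fin.lt_def, extN]
    split <;> simp [Fin.eta]
  rw [Finset.sum_congr rfl (fun j _ => h1 j),
    Fin.sum_univ_eq_sum_range (fun n => if n < k.val then extN K m n else 0) K]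
  rw [← Finset.sum_filter]
  congr 1
  ext n
  simp only [Finset.mem_filter, Finset.mem_range]
  omega

/-- The greedy profile `astar`, which assigns `m k` players to each arm `k`
before the least favored arm `L` and the remaining players to arm `L`
(equivalently `astar k = min (m k) (M - ∑_{j<k} m j)` with truncated subtraction),
maximizes `f a = ∑ k, min (a k) (m k) * μ k` over all assignment profiles with `∑ k, a k = M`,
given `μ 1 > μ 2 > ... > μ K > 0` and `M ≤ ∑ k, m k`. -/
theorem greedy_profile_maximizes
    (K M : ℕ) (m : Fin K → ℕ) (μ : Fin K → ℝ)
    (hm : ∀ k, 0 < m k)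
    (hμpos : ∀ k, 0 < μ k)
    (hμdec : ∀ j k : Fin K, j < k → μ k < μ j)
    (hM : M ≤ ∑ k, m k)
    (astar : Fin K → ℕ)
    (hastar : ∀ k, astar k =
      min (m k) (M - ∑ j ∈ Finset.univ.filter (fun j => j < k), m j))
    (a : Fin K → ℕ) (ha : ∑ k, a k = M) :
    ∑ k, (min (a k) (m k) : ℝ) * μ k ≤ ∑ k, (min (astar k) (m k) : ℝ) * μ k := by
  set aa := extN K a with haa
  set mm := extN K m with hmm
  set cc := extN K astar with hcc
  set g := extR K μ with hg
  -- astar k ≤ m k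
  have hastarle : ∀ k, astar k ≤ m k := fun k => (hastar k) ▸ min_le_left _ _
  -- rewrite both sides as range sums
  have hLHS : ∑ k, (min (a k) (m k) : ℝ) * μ k
      = ∑ n ∈ Finset.range K, (min (aa n) (mm n) : ℝ) * g n := by
    rw [← Fin.sum_univ_eq_sum_range (fun n => (min (aa n) (mm n) : ℝ) * g n) K]
    apply Finset.sum_congr rfl
    intro j _
    simp [haa, hmm, hg, extN, extR, Fin.eta]
  have hRHS : ∑ k, (min (astar k) (m k) : ℝ) * μ k
      = ∑ n ∈ Finset.range K, (cc n : ℝ) * g n := by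
    rw [← Fin.sum_univ_eq_sum_range (fun n => (cc n : ℝ) * g n) K]
    apply Finset.sum_congr rfl
    intro j _
    simp only [hcc, hg, extN, extR, Fin.eta, dif_pos j.isLt]
    rw [min_eq_left (show ((astar j : ℝ)) ≤ (m j : ℝ) by exact_mod_cast hastarle j)]
  -- partial sums facts
  have hsum_a : ∑ j ∈ Finset.range K, aa j = M := by
    rw [← Fin.sum_univ_eq_sum_range (fun n => aa n) K, ← ha]
    exact Finset.sum_congr rfl fun j _ => by simp [haa, extN, Fin.eta]
  have hcpref : ∀ n, n ≤ K →
      ∑ j ∈ Finset.range n, cc j = min M (∑ j ∈ Finset.range n, mm j) := by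
    intro n hn
    induction n with
    | zero => simp
    | succ n ih =>
      have hnK : n < K := hn
      have hccn : cc n = min (mm n) (M - ∑ j ∈ Finset.range n, mm j) := by
        rw [hcc]
        show extN K astar n = _
        rw [extN]
        rw [dif_pos hnK, hastar ⟨n, hnK⟩, filter_sum_eq]
        show _ = (if h : n < K then m ⟨n, h⟩ else 0) ⊓ _
        rw [dif_pos hnK]
      rw [Finset.sum_range_succ, Finset.sum_range_succ, ih (le_of_lt hnK), hccn]
      omega
  have hbpref : ∀ n, n ≤ K →
      ∑ j ∈ Finset.range n, min (aa j) (mm j) ≤ min M (∑ j ∈ Finset.range n, mm j) := by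
    intro n hn
    refine le_min ?_ ?_
    · calc ∑ j ∈ Finset.range n, min (aa j) (mm j)
          ≤ ∑ j ∈ Finset.range n, aa j :=
            Finset.sum_le_sum fun j _ => min_le_left _ _
        _ ≤ ∑ j ∈ Finset.range K, aa j :=
            Finset.sum_le_sum_of_subset (Finset.range_subset_range.mpr hn)
        _ = M := hsum_a
    · exact Finset.sum_le_sum fun j _ => min_le_right _ _
  -- nonnegativity of differences of g
  have hgdiff : ∀ k, k < K → 0 ≤ g k - g (k+1) := by
    intro k hk
    have hgk : g k = μ ⟨k, hk⟩ := by rw [hg]; show extR K μ k = _; rw [extR, dif_pos hk]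
    by_cases hk1 : k + 1 < K
    · have : g (k+1) = μ ⟨k+1, hk1⟩ := by rw [hg]; show extR K μ (k+1) = _; rw [extR, dif_pos hk1]
      rw [hgk, this]
      have := hμdec ⟨k, hk⟩ ⟨k+1, hk1⟩ (by simp [Fin.lt_def])
      linarith
    · have : g (k+1) = 0 := by rw [hg]; show extR K μ (k+1) = _; rw [extR, dif_neg hk1]
      rw [hgk, this]
      have := hμpos ⟨k, hk⟩
      linarith
  have hgK : g K = 0 := by rw [hg]; show extR K μ K = _; rw [extR, dif_neg (lt_irrefl K)]
  rw [hLHS, hRHS]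
  rw [abel_sum (fun n => (min (aa n) (mm n) : ℝ)) g K,
    abel_sum (fun n => (cc n : ℝ)) g K, hgK, mul_zero, mul_zero]
  simp only [add_zero]
  refine Finset.sum_le_sum fun k hk => ?_
  have hk' : k + 1 ≤ K := Finset.mem_range.mp hk
  have h1 := (hbpref (k+1) hk').trans_eq (hcpref (k+1) hk').symm
  exact mul_le_mul_of_nonneg_right (by exact_mod_cast h1) (hgdiff k (Finset.mem_range.mp hk))
end

section
/- If |mu_hat - mu| <= phi_1 and |nu_hat - m*mu| <= m*phi_2 where m is a positive integer, mu > 0, and phi_1 + phi_2 < mu_hat, then m lies in the interval [nu_hat / (mu_hat + phi_1 + phi_2), nu_hat / (mu_hat - phi_1 - phi_2)]. -/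
/-- If `|muh - μ| ≤ φ₁` and `|nuh - m·μ| ≤ m·φ₂` with `m` a positive integer,
`μ > 0`, and `φ₁ + φ₂ < muh`, then
`m ∈ [nuh / (muh + φ₁ + φ₂), nuh / (muh - φ₁ - φ₂)]`. -/
theorem capacity_confidence_interval
    (m : ℕ) (hm : 0 < m) (μ muh nuh φ₁ φ₂ : ℝ)
    (hμ : 0 < μ) (hmuh : 0 ≤ muh) (hnuh : 0 ≤ nuh)
    (hφ₁ : 0 ≤ φ₁) (hφ₂ : 0 ≤ φ₂)
    (h1 : |muh - μ| ≤ φ₁)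
    (h2 : |nuh - (m : ℝ) * μ| ≤ (m : ℝ) * φ₂)
    (h3 : φ₁ + φ₂ < muh) :
    nuh / (muh + φ₁ + φ₂) ≤ (m : ℝ) ∧ (m : ℝ) ≤ nuh / (muh - φ₁ - φ₂) := by
  obtain ⟨ha, hb⟩ := abs_le.1 h1
  obtain ⟨hc, hd⟩ := abs_le.1 h2
  have hm1 : (1 : ℝ) ≤ (m : ℝ) := by exact_mod_cast hm
  have hd1 : (0 : ℝ) < muh + φ₁ + φ₂ := by linarith
  have hd2 : (0 : ℝ) < muh - φ₁ - φ₂ := by linarith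
  constructor
  · rw [div_le_iff₀ hd1]
    nlinarith
  · rw [le_div_iff₀ hd2]
    nlinarith
end

section
/- Define phi(x, delta) = sqrt((1 + 1/x) * log(2*sqrt(x+1)/delta) / (2x)) for x >= 1 and 0 < delta < 2. If x >= 49 m^2 log(2/delta) / mu^2 and delta <= 2*exp(-49 m^2 / mu^2), then phi(x, delta) <= mu/(7m), for any positive integer m and mu in (0,1]. -/
set_option maxHeartbeats 1000000 in
/-- For `φ(x, δ) = sqrt((1 + 1/x) · log(2√(x+1)/δ) / (2x))` with `x ≥ 1`
and `0 < δ < 2`: if `x ≥ 49 m² log(2/δ) / μ²` and `δ ≤ 2 exp(-49 m²/μ²)`,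
then `φ(x, δ) ≤ μ/(7m)`, for any positive integer `m` and `μ ∈ (0, 1]`. -/
theorem confidence_radius_sample_bound
    (m : ℕ) (hm : 0 < m) (μ δ x : ℝ)
    (hμ : 0 < μ) (hμ1 : μ ≤ 1)
    (hx1 : 1 ≤ x) (hδ0 : 0 < δ) (hδ2 : δ < 2)
    (hx : 49 * (m : ℝ) ^ 2 * Real.log (2 / δ) / μ ^ 2 ≤ x)
    (hδ : δ ≤ 2 * Real.exp (-(49 * (m : ℝ) ^ 2 / μ ^ 2))) :
    Real.sqrt ((1 + 1 / x) * Real.log (2 * Real.sqrt (x + 1) / δ) / (2 * x)) ≤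
      μ / (7 * m) := by
  have hm1 : (1:ℝ) ≤ m := by exact_mod_cast hm
  have hμ2p : (0:ℝ) < μ ^ 2 := by positivity
  set C : ℝ := 49 * (m : ℝ) ^ 2 / μ ^ 2 with hCdef
  clear_value C
  have hC49 : (49:ℝ) ≤ C := by
    rw [hCdef, le_div_iff₀ hμ2p]; nlinarith
  have hC0 : (0:ℝ) < C := by linarith
  set L : ℝ := Real.log (2 / δ) with hLdef
  clear_value L
  have hx0 : (0:ℝ) < x := by linarith
  -- L ≥ C
  have hL : C ≤ L := by
    have h1 : Real.exp C ≤ 2 / δ := by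
      rw [le_div_iff₀ hδ0]
      calc Real.exp C * δ ≤ Real.exp C * (2 * Real.exp (-C)) := by
            exact mul_le_mul_of_nonneg_left hδ (Real.exp_pos C).le
        _ = 2 := by
            rw [mul_left_comm, ← Real.exp_add]
            simp
    calc C = Real.log (Real.exp C) := (Real.log_exp C).symm
      _ ≤ L := hLdef ▸ Real.log_le_log (Real.exp_pos C) h1
  -- x ≥ C * L
  have hxCL : C * L ≤ x := by
    have e : C * L = 49 * (m : ℝ) ^ 2 * L / μ ^ 2 := by
      rw [hCdef]; field_simp
    rw [e]; exact hx
  have hxC2 : C ^ 2 ≤ x := by nlinarith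
  have hx2401 : (2401:ℝ) ≤ x := by nlinarith
  set s : ℝ := Real.sqrt x with hsdef
  clear_value s
  have hs0 : 0 ≤ s := hsdef ▸ Real.sqrt_nonneg x
  have hs2 : s ^ 2 = x := hsdef ▸ Real.sq_sqrt hx0.le
  have hs49 : (49:ℝ) ≤ s := by
    nlinarith [hs2, hx2401, sq_nonneg (s - 49)]
  have hCs : C ≤ s := by nlinarith [hxC2, hs2, sq_nonneg (s - C)]
  -- bound log(x+1)
  set G : ℝ := Real.log (x + 1) with hGdef
  clear_value G
  have hG0 : 0 ≤ G := hGdef ▸ Real.log_nonneg (by linarith : (1:ℝ) ≤ x + 1)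
  set t : ℝ := Real.sqrt (Real.sqrt (x + 1)) with htdef
  clear_value t
  have ht0 : 0 ≤ t := htdef ▸ Real.sqrt_nonneg (Real.sqrt (x + 1))
  have ht4 : t ^ 4 = x + 1 := by
    have h1 : t ^ 2 = Real.sqrt (x + 1) := htdef ▸ Real.sq_sqrt (Real.sqrt_nonneg (x + 1))
    have h2 : (Real.sqrt (x + 1)) ^ 2 = x + 1 := Real.sq_sqrt (by linarith)
    calc t ^ 4 = (t ^ 2) ^ 2 := by ring
      _ = x + 1 := by rw [h1, h2]
  have htpos : 0 < t := htdef ▸ Real.sqrt_pos.mpr (Real.sqrt_pos.mpr (by linarith : (0:ℝ) < x + 1))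
  have hGt : G ≤ 4 * t - 4 := by
    have h1 : Real.log t ≤ t - 1 := Real.log_le_sub_one_of_pos htpos
    have h2 : G = 4 * Real.log t := by
      rw [hGdef, ← ht4, Real.log_pow]; push_cast; ring
    linarith [h2 ▸ (by linarith : 4 * Real.log t ≤ 4 * t - 4)]
  have h4t : 4 * t ≤ s := by
    have e1 : (4 * t) ^ 4 = 256 * (x + 1) := by
      calc (4 * t) ^ 4 = 256 * t ^ 4 := by ring
        _ = 256 * (x + 1) := by rw [ht4]
    have e2 : s ^ 4 = x ^ 2 := by
      calc s ^ 4 = (s ^ 2) ^ 2 := by ring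
        _ = x ^ 2 := by rw [hs2]
    have h : (4 * t) ^ 4 ≤ s ^ 4 := by
      rw [e1, e2]; nlinarith [hx2401]
    exact le_of_pow_le_pow_left₀ (by norm_num) hs0 h
  have hGs : G ≤ s - 4 := by linarith
  -- key polynomial inequality
  have key : (x + 1) * ((L + G / 2) * C) ≤ 2 * x ^ 2 := by
    have hCG : C * G ≤ s * (s - 4) := by
      calc C * G ≤ s * G := mul_le_mul_of_nonneg_right hCs hG0
        _ ≤ s * (s - 4) := mul_le_mul_of_nonneg_left hGs hs0
    have h1 : (x + 1) * (C * L) ≤ (x + 1) * x :=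
      mul_le_mul_of_nonneg_left hxCL (by linarith)
    have h2 : (x + 1) * (C * G) ≤ (x + 1) * (s * (s - 4)) :=
      mul_le_mul_of_nonneg_left hCG (by linarith)
    nlinarith [h1, h2, hs2, hx2401, hs49, mul_nonneg hs0 hx0.le]
  -- main analytic bound
  have hA : (1 + 1 / x) * (L + G / 2) / (2 * x) ≤ 1 / C := by
    rw [div_le_div_iff₀ (by positivity) hC0]
    have e : (1 + 1 / x) * (L + G / 2) * C = (x + 1) * ((L + G / 2) * C) / x := by
      field_simp
    rw [e]
    rw [div_le_iff₀ hx0]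
    nlinarith [key]
  -- rewrite the log
  have hlogeq : Real.log (2 * Real.sqrt (x + 1) / δ) = L + G / 2 := by
    have hsq : (0:ℝ) < Real.sqrt (x + 1) := Real.sqrt_pos.mpr (by linarith)
    rw [Real.log_div (by positivity) (ne_of_gt hδ0),
      Real.log_mul two_ne_zero (ne_of_gt hsq),
      Real.log_sqrt (by linarith : (0:ℝ) ≤ x + 1),
      hLdef, Real.log_div two_ne_zero (ne_of_gt hδ0), hGdef]
    ring
  rw [hlogeq]
  have hrhs : μ / (7 * m) = Real.sqrt (1 / C) := by
    have hmne : (m:ℝ) ≠ 0 := by positivity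
    have e : 1 / C = (μ / (7 * m)) ^ 2 := by
      rw [hCdef]; field_simp; ring
    rw [e, Real.sqrt_sq (by positivity)]
  rw [hrhs]
  exact Real.sqrt_le_sqrt hA
end

section
/- In the rank-assignment procedure of SIC-SDA, consider M players with distinct preliminary ranks k_1 < k_2 < ... < k_M in {1,...,K-1}, and the schedule over 2K-2 time slots where the player with preliminary rank k plays arm k at slots t_1,...,t_{2k} and t_{K+k},...,t_{2K-2}, and plays arm s-k at slot t_s for s in {2k+1,...,K+k-1}. Then any two distinct players share an arm in exactly one time slot, and the player with preliminary rank k experiences exactly (number of players with smaller preliminary rank) sharing events in slots t_1,...,t_{2k}, and exactly M-1 sharing events in total. -/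
attribute [local instance] Classical.propDecidable

/-- Arm played at slot `s` by the player with preliminary rank `k` in the SIC-SDA
rank-assignment schedule over `2K-2` slots: arm `k` at slots `1,…,2k` and
`K+k,…,2K-2`, and arm `s-k` at slots `2k+1,…,K+k-1`. -/
def armOf (K k s : ℕ) : ℕ := if s ≤ 2 * k ∨ K + k ≤ s then k else s - k

/-- In the SIC-SDA rank-assignment schedule, for players with distinct
preliminary ranks `k 1 < … < k M` in `{1,…,K-1}`: (a) any two distinct players share an
arm in exactly one of the `2K-2` slots; (b) the player with preliminary rank `k i`
experiences exactly `#{j : k j < k i}` sharing events during slots `1,…,2·(k i)`;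
(c) each player experiences exactly `M - 1` sharing events in total. -/
theorem rank_assignment_sharing
    (K M : ℕ) (hK : 2 ≤ K) (k : Fin M → ℕ)
    (hmono : StrictMono k)
    (hrange : ∀ i, 1 ≤ k i ∧ k i ≤ K - 1) :
    (∀ i j : Fin M, i ≠ j →
      ((Finset.Icc 1 (2 * K - 2)).filter
        (fun s => armOf K (k i) s = armOf K (k j) s)).card = 1) ∧
    (∀ i : Fin M,
      ((Finset.Icc 1 (2 * k i)).filter
        (fun s => ∃ j, j ≠ i ∧ armOf K (k j) s = armOf K (k i) s)).card =
      (Finset.univ.filter (fun j : Fin M => k j < k i)).card) ∧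
    (∀ i : Fin M,
      ((Finset.Icc 1 (2 * K - 2)).filter
        (fun s => ∃ j, j ≠ i ∧ armOf K (k j) s = armOf K (k i) s)).card = M - 1) := by
  have hinj : Function.Injective k := hmono.injective
  have key : ∀ i j : Fin M, i ≠ j → ∀ s,
      armOf K (k i) s = armOf K (k j) s ↔ s = k i + k j := by
    intro i j hij s
    have hi := hrange i; have hj := hrange j
    have hne : k i ≠ k j := fun h => hij (hinj h)
    unfold armOf; split_ifs <;> omega
  have hadd : ∀ i : Fin M, Function.Injective (fun j : Fin M => k j + k i) := by
    intro i a b h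
    simp only at h
    exact hinj (Nat.add_right_cancel h)
  refine ⟨?_, ?_, ?_⟩
  · intro i j hij
    have : (Finset.Icc 1 (2 * K - 2)).filter
        (fun s => armOf K (k i) s = armOf K (k j) s) = {k i + k j} := by
      ext s
      simp only [Finset.mem_filter, Finset.mem_Icc, Finset.mem_singleton, key i j hij]
      have hi := hrange i; have hj := hrange j
      omega
    rw [this, Finset.card_singleton]
  · intro i
    have himg : (Finset.Icc 1 (2 * k i)).filter
        (fun s => ∃ j, j ≠ i ∧ armOf K (k j) s = armOf K (k i) s)
        = (Finset.univ.filter (fun j : Fin M => k j < k i)).image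
            (fun j => k j + k i) := by
      ext s
      simp only [Finset.mem_filter, Finset.mem_Icc, Finset.mem_image, Finset.mem_univ,
        true_and]
      constructor
      · rintro ⟨⟨h1, h2⟩, j, hji, hs⟩
        have hs' := (key j i hji s).mp hs
        have hne : k j ≠ k i := fun h => hji (hinj h)
        exact ⟨j, by omega, by omega⟩
      · rintro ⟨j, hjlt, rfl⟩
        have hji : j ≠ i := fun h => by subst h; omega
        have hj := hrange j; have hi := hrange i
        exact ⟨⟨by omega, by omega⟩, j, hji, (key j i hji _).mpr rfl⟩
    rw [himg, Finset.card_image_of_injective _ (hadd i)]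
  · intro i
    have himg : (Finset.Icc 1 (2 * K - 2)).filter
        (fun s => ∃ j, j ≠ i ∧ armOf K (k j) s = armOf K (k i) s)
        = (Finset.univ.filter (fun j : Fin M => j ≠ i)).image
            (fun j => k j + k i) := by
      ext s
      simp only [Finset.mem_filter, Finset.mem_Icc, Finset.mem_image, Finset.mem_univ,
        true_and]
      constructor
      · rintro ⟨⟨h1, h2⟩, j, hji, hs⟩
        exact ⟨j, hji, ((key j i hji s).mp hs).symm⟩
      · rintro ⟨j, hji, rfl⟩
        have hj := hrange j; have hi := hrange i
        exact ⟨⟨by omega, by omega⟩, j, hji, (key j i hji _).mpr rfl⟩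
    rw [himg, Finset.card_image_of_injective _ (hadd i), Finset.filter_ne',
      Finset.card_erase_of_mem (Finset.mem_univ i), Finset.card_univ, Fintype.card_fin]
end

section
/- Let s be the number of rounds required to orthogonalize M players onto K arms, where in each round every unassigned player independently and uniformly picks one of the first K arms and becomes assigned if no other player (assigned or unassigned) picks the same arm. Then E[s] <= M(K-1)(K+1)/(K-M), assuming M < K. -/
/-!
Conditionally on the assignment after round `r`, an unassigned player `i` stays unassigned in
round `r + 1` only if its fresh uniform pick hits the arm of an assigned player or the fresh pick
of another unassigned player. The assignment after `r` rounds depends only on the picks of rounds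
`< r`, so it is independent of the fresh picks, and a union bound over the other players bounds
this failure probability by `M / K`. Hence player `i` is still unassigned after `r` rounds with
probability at most `(M / K) ^ r`, the number of rounds `s` satisfies `P(s > n) ≤ M (M / K) ^ n`,
and `E[s] = ∑ P(s > n) ≤ M K / (K - M) ≤ M (K - 1)(K + 1) / (K - M)`.
-/

open MeasureTheory ProbabilityTheory

/-- Orthogonalization process: `assigned U r i ω` is the arm (if any) that player `i`
holds after `r` rounds, where in each round every unassigned player picks the arm
`U r i ω` (assigned players keep playing their arm) and an unassigned player becomes
assigned to its picked arm if no other player picks the same arm in that round. -/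
def assigned {Ω : Type*} {K M : ℕ} (U : ℕ → Fin M → Ω → Fin K) :
    ℕ → Fin M → Ω → Option (Fin K)
  | 0, _, _ => none
  | r + 1, i, ω =>
    let pick : Fin M → Fin K := fun j => (assigned U r j ω).getD (U r j ω)
    match assigned U r i ω with
    | some j => some j
    | none =>
      if ∀ j : Fin M, j ≠ i → pick j ≠ pick i then some (pick i) else none

open Finset
open scoped ENNReal

section

variable {Ω : Type*} [MeasurableSpace Ω] {P : Measure Ω}

lemma measure_eq_le_of_indepFun_of_uniform {K : ℕ} {X Y : Ω → Fin K} (hXY : IndepFun X Y P)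
    (hX : ∀ a, P {ω | X ω = a} = (K : ℝ≥0∞)⁻¹) (hY : ∀ a, P {ω | Y ω = a} = (K : ℝ≥0∞)⁻¹) :
    P {ω | X ω = Y ω} ≤ (K : ℝ≥0∞)⁻¹ := by
  have hcover : {ω | X ω = Y ω} = ⋃ a ∈ (univ : Finset (Fin K)), X ⁻¹' {a} ∩ Y ⁻¹' {a} := by
    ext ω
    simp [eq_comm]
  calc P {ω | X ω = Y ω} ≤ ∑ a : Fin K, P (X ⁻¹' {a} ∩ Y ⁻¹' {a}) :=
        hcover ▸ measure_biUnion_finset_le _ _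
    _ = ∑ _a : Fin K, (K : ℝ≥0∞)⁻¹ * (K : ℝ≥0∞)⁻¹ := by
        refine sum_congr rfl fun a _ => ?_
        rw [hXY.measure_inter_preimage_eq_mul _ _ .of_discrete .of_discrete]
        exact congr_arg₂ _ (hX a) (hY a)
    _ = K * (K : ℝ≥0∞)⁻¹ * (K : ℝ≥0∞)⁻¹ := by simp [mul_assoc]
    _ ≤ (K : ℝ≥0∞)⁻¹ := mul_le_of_le_one_left' (ENNReal.mul_inv_le_one _)

lemma lintegral_natCast_eq_tsum_measure_lt {X : Ω → ℕ} (hX : Measurable X) :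
    ∫⁻ ω, (X ω : ℝ≥0∞) ∂P = ∑' n : ℕ, P {ω | n < X ω} := by
  have hlt : ∀ n : ℕ, MeasurableSet {ω | n < X ω} := fun n => hX measurableSet_Ioi
  have hsum : ∀ ω, (X ω : ℝ≥0∞) = ∑' n : ℕ, {ω | n < X ω}.indicator 1 ω := by
    intro ω
    rw [tsum_eq_sum (s := range (X ω)) fun n hn => Set.indicator_of_notMem (by simpa using hn) _]
    simp [Set.indicator_apply, filter_true_of_mem fun n hn => mem_range.mp hn]
  simp_rw [hsum]
  rw [lintegral_tsum fun n => (measurable_one.indicator (hlt n)).aemeasurable]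
  simp [lintegral_indicator_one (hlt _)]

lemma measurable_nat_sInf_setOf {p : ℕ → Ω → Prop} (hp : ∀ n, MeasurableSet {ω | p n ω}) :
    Measurable fun ω => sInf {n | p n ω} := by
  refine measurable_of_Iic fun n => ?_
  have hIic : (fun ω => sInf {n | p n ω}) ⁻¹' Set.Iic n
      = (⋃ k ≤ n, {ω | p k ω}) ∪ ⋂ k, {ω | p k ω}ᶜ := by  -- `sInf ∅ = 0` gives the second part
    ext ω
    simp only [Set.mem_preimage, Set.mem_Iic, Set.mem_union, Set.mem_iUnion, Set.mem_iInter,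
      Set.mem_ofPred_eq, Set.mem_compl_iff, exists_prop]
    constructor
    · intro h
      by_cases hne : ∃ k, p k ω
      · exact Or.inl ⟨_, h, Nat.sInf_mem hne⟩
      · exact Or.inr (not_exists.mp hne)
    · rintro (⟨k, hk, hpk⟩ | h)
      · exact (Nat.sInf_le hpk).trans hk
      · simp [h]
  rw [hIic]
  exact (MeasurableSet.biUnion (Set.to_countable _) fun k _ => hp k).union
    (MeasurableSet.iInter fun k => (hp k).compl)

end

namespace Orthogonalization

variable {K M : ℕ}

def playedArms (c : Fin M → Option (Fin K)) (x : Fin M → Fin K) : Fin M → Fin K :=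
  fun j => (c j).getD (x j)

def Collision (c : Fin M → Option (Fin K)) (i : Fin M) : Set (Fin M → Fin K) :=
  {x | ∃ j ≠ i, playedArms c x j = playedArms c x i}

open Classical in
noncomputable def step (c : Fin M → Option (Fin K)) (x : Fin M → Fin K) : Fin M → Option (Fin K) :=
  fun i => if c i = none ∧ x ∈ Collision c i then none else some (playedArms c x i)

lemma step_eq_none_iff {c : Fin M → Option (Fin K)} {x : Fin M → Fin K} {i : Fin M} :
    step c x i = none ↔ c i = none ∧ x ∈ Collision c i := by
  simp [step]

variable {Ω : Type*} (U : ℕ → Fin M → Ω → Fin K)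

def assignment (r : ℕ) (ω : Ω) : Fin M → Option (Fin K) := fun i => assigned U r i ω

def pastPicks (r : ℕ) (ω : Ω) : Fin r × Fin M → Fin K := fun p => U p.1 p.2 ω

def roundPicks (r : ℕ) (ω : Ω) : Fin M → Fin K := fun i => U r i ω

noncomputable def roundsToOrthogonalize (ω : Ω) : ℕ := sInf {r | ∀ i, (assigned U r i ω).isSome}

lemma assignment_succ (r : ℕ) (ω : Ω) :
    assignment U (r + 1) ω = step (assignment U r ω) (roundPicks U r ω) := by
  funext i
  rcases h : assigned U r i ω <;>
    simp [assignment, assigned, h, step, Collision, playedArms, roundPicks, apply_ite]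

lemma assignment_eq_of_pastPicks_eq {r : ℕ} {ω ω' : Ω} (h : pastPicks U r ω = pastPicks U r ω') :
    assignment U r ω = assignment U r ω' := by
  induction r with
  | zero => rfl
  | succ r ih =>
    have hpast : pastPicks U r ω = pastPicks U r ω' :=
      funext fun p => congrFun h (p.1.castSucc, p.2)
    have hround : roundPicks U r ω = roundPicks U r ω' :=
      funext fun j => congrFun h (Fin.last r, j)
    rw [assignment_succ, assignment_succ, ih hpast, hround]

lemma assignment_factorsThrough_pastPicks (r : ℕ) :
    (assignment U r).FactorsThrough (pastPicks U r) :=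
  fun _ _ => assignment_eq_of_pastPicks_eq U

lemma preimage_assignment_eq (r : ℕ) (C : Set (Fin M → Option (Fin K))) :
    assignment U r ⁻¹' C = pastPicks U r ⁻¹'
      (Function.extend (pastPicks U r) (assignment U r) (fun _ _ => none) ⁻¹' C) := by
  ext ω
  simp [(assignment_factorsThrough_pastPicks U r).extend_apply]

section Probability

variable [MeasurableSpace Ω] {P : Measure Ω}

lemma measurableSet_preimage_assignment (hmeas : ∀ n i, Measurable (U n i)) (r : ℕ)
    (C : Set (Fin M → Option (Fin K))) : MeasurableSet (assignment U r ⁻¹' C) := by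
  rw [preimage_assignment_eq]
  exact measurable_pi_lambda _ (fun p : Fin r × Fin M => hmeas p.1 p.2) .of_discrete

lemma indepFun_pastPicks_roundPicks (hmeas : ∀ n i, Measurable (U n i))
    (hindep : iIndepFun (fun (p : ℕ × Fin M) ω => U p.1 p.2 ω) P) (r : ℕ) :
    IndepFun (pastPicks U r) (roundPicks U r) P := by
  have hdisj : Disjoint (range r ×ˢ (univ : Finset (Fin M))) ({r} ×ˢ univ) := by
    simp only [disjoint_left, mem_product, mem_range, mem_singleton]
    omega
  exact (hindep.indepFun_finset _ _ hdisj fun p => hmeas p.1 p.2).comp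
    (φ := fun v (p : Fin r × Fin M) => v ⟨(p.1, p.2), by simp⟩)
    (ψ := fun v j => v ⟨(r, j), by simp⟩) (measurable_of_countable _) (measurable_of_countable _)

lemma measure_preimage_assignment_inter (hmeas : ∀ n i, Measurable (U n i))
    (hindep : iIndepFun (fun (p : ℕ × Fin M) ω => U p.1 p.2 ω) P) (r : ℕ)
    (C : Set (Fin M → Option (Fin K))) (B : Set (Fin M → Fin K)) :
    P (assignment U r ⁻¹' C ∩ roundPicks U r ⁻¹' B) =
      P (assignment U r ⁻¹' C) * P (roundPicks U r ⁻¹' B) := by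
  rw [preimage_assignment_eq]
  exact (indepFun_pastPicks_roundPicks U hmeas hindep r).measure_inter_preimage_eq_mul _ _
    .of_discrete .of_discrete

lemma measurable_roundsToOrthogonalize (hmeas : ∀ n i, Measurable (U n i)) :
    Measurable (roundsToOrthogonalize U) :=
  measurable_nat_sInf_setOf fun r =>
    measurableSet_preimage_assignment U hmeas r {c | ∀ i, (c i).isSome}

lemma measure_preimage_collision_le {X : Ω → Fin M → Fin K}
    (hindep : Pairwise fun j j' => IndepFun (fun ω => X ω j) (fun ω => X ω j') P)
    (hunif : ∀ j a, P {ω | X ω j = a} = (K : ℝ≥0∞)⁻¹)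
    {c : Fin M → Option (Fin K)} {i : Fin M} (hci : c i = none) :
    P (X ⁻¹' Collision c i) ≤ M * (K : ℝ≥0∞)⁻¹ := by
  have hsub : X ⁻¹' Collision c i ⊆ ⋃ j ∈ univ.erase i, {ω | playedArms c (X ω) j = X ω i} := by
    rintro ω ⟨j, hji, hj⟩
    simp only [Set.mem_iUnion, mem_erase, mem_univ]
    exact ⟨j, ⟨hji, trivial⟩, by simpa [playedArms, hci] using hj⟩
  have hj : ∀ j ≠ i, P {ω | playedArms c (X ω) j = X ω i} ≤ (K : ℝ≥0∞)⁻¹ := by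
    intro j hji
    rcases hcj : c j with _ | a
    · simpa [playedArms, hcj] using
        measure_eq_le_of_indepFun_of_uniform (hindep hji) (hunif j) (hunif i)
    · simpa [playedArms, hcj, eq_comm] using (hunif i a).le
  calc P (X ⁻¹' Collision c i)
      ≤ ∑ j ∈ univ.erase i, P {ω | playedArms c (X ω) j = X ω i} :=
        (measure_mono hsub).trans (measure_biUnion_finset_le _ _)
    _ ≤ ∑ _j ∈ univ.erase i, (K : ℝ≥0∞)⁻¹ := sum_le_sum fun j hj' => hj j (ne_of_mem_erase hj')
    _ ≤ ∑ _j : Fin M, (K : ℝ≥0∞)⁻¹ := sum_le_sum_of_subset (erase_subset _ _)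
    _ = M * (K : ℝ≥0∞)⁻¹ := by simp

variable (hmeas : ∀ n i, Measurable (U n i))
  (hindep : iIndepFun (fun (p : ℕ × Fin M) ω => U p.1 p.2 ω) P)
  (hunif : ∀ n i (j : Fin K), P {ω | U n i ω = j} = (K : ℝ≥0∞)⁻¹)
include hmeas hindep hunif

lemma measure_assigned_succ_eq_none_le (r : ℕ) (i : Fin M) :
    P {ω | assigned U (r + 1) i ω = none} ≤
      M * (K : ℝ≥0∞)⁻¹ * P {ω | assigned U r i ω = none} := by
  set Free : Finset (Fin M → Option (Fin K)) := univ.filter (· i = none)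
  have hsub : {ω | assigned U (r + 1) i ω = none} ⊆
      ⋃ c ∈ Free, assignment U r ⁻¹' {c} ∩ roundPicks U r ⁻¹' Collision c i := by
    intro ω hω
    have : step (assignment U r ω) (roundPicks U r ω) i = none := by
      rw [← assignment_succ]
      exact hω
    rw [step_eq_none_iff] at this
    simp only [Set.mem_iUnion]
    exact ⟨assignment U r ω, by simpa [Free] using this.1, rfl, this.2⟩
  have hround : Pairwise fun j j' =>
      IndepFun (fun ω => roundPicks U r ω j) (fun ω => roundPicks U r ω j') P :=
    fun j j' hjj' => hindep.indepFun (i := (r, j)) (j := (r, j')) (by simpa using hjj')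
  calc P {ω | assigned U (r + 1) i ω = none}
      ≤ ∑ c ∈ Free, P (assignment U r ⁻¹' {c} ∩ roundPicks U r ⁻¹' Collision c i) :=
        (measure_mono hsub).trans (measure_biUnion_finset_le _ _)
    _ = ∑ c ∈ Free, P (assignment U r ⁻¹' {c}) * P (roundPicks U r ⁻¹' Collision c i) :=
        sum_congr rfl fun c _ => measure_preimage_assignment_inter U hmeas hindep r _ _
    _ ≤ ∑ c ∈ Free, P (assignment U r ⁻¹' {c}) * (M * (K : ℝ≥0∞)⁻¹) := by
        gcongr with c hc
        exact measure_preimage_collision_le hround (hunif r) (mem_filter.mp hc).2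
    _ = M * (K : ℝ≥0∞)⁻¹ * P {ω | assigned U r i ω = none} := by
        rw [← sum_mul, sum_measure_preimage_singleton _
          fun c _ => measurableSet_preimage_assignment U hmeas r _, mul_comm]
        simp [Free, assignment]

lemma measure_assigned_eq_none_le [IsProbabilityMeasure P] (r : ℕ) (i : Fin M) :
    P {ω | assigned U r i ω = none} ≤ (M * (K : ℝ≥0∞)⁻¹) ^ r := by
  induction r with
  | zero => simpa using prob_le_one (μ := P)
  | succ r ih =>
    calc P {ω | assigned U (r + 1) i ω = none}
        ≤ M * (K : ℝ≥0∞)⁻¹ * P {ω | assigned U r i ω = none} :=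
          measure_assigned_succ_eq_none_le U hmeas hindep hunif r i
      _ ≤ (M * (K : ℝ≥0∞)⁻¹) ^ (r + 1) := by
          rw [pow_succ']
          gcongr

lemma measure_lt_roundsToOrthogonalize_le [IsProbabilityMeasure P] (n : ℕ) :
    P {ω | n < roundsToOrthogonalize U ω} ≤ M * (M * (K : ℝ≥0∞)⁻¹) ^ n := by
  have hsub : {ω | n < roundsToOrthogonalize U ω} ⊆ ⋃ i, {ω | assigned U n i ω = none} := by
    intro ω hω
    by_contra hnone
    simp only [Set.mem_iUnion, Set.mem_ofPred_eq, not_exists] at hnone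
    have hdone : n ∈ {r | ∀ i, (assigned U r i ω).isSome} :=
      fun i => Option.isSome_iff_ne_none.mpr (hnone i)
    exact (Nat.sInf_le hdone).not_gt hω
  calc P {ω | n < roundsToOrthogonalize U ω}
      ≤ ∑ i : Fin M, P {ω | assigned U n i ω = none} :=
        (measure_mono hsub).trans (measure_iUnion_fintype_le _ _)
    _ ≤ ∑ _i : Fin M, (M * (K : ℝ≥0∞)⁻¹) ^ n :=
        sum_le_sum fun i _ => measure_assigned_eq_none_le U hmeas hindep hunif n i
    _ = M * (M * (K : ℝ≥0∞)⁻¹) ^ n := by simp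

lemma lintegral_roundsToOrthogonalize_le [IsProbabilityMeasure P] :
    ∫⁻ ω, (roundsToOrthogonalize U ω : ℝ≥0∞) ∂P ≤ M * (1 - M * (K : ℝ≥0∞)⁻¹)⁻¹ := by
  rw [lintegral_natCast_eq_tsum_measure_lt (measurable_roundsToOrthogonalize U hmeas),
    ← ENNReal.tsum_geometric, ← ENNReal.tsum_mul_left]
  exact ENNReal.tsum_le_tsum (measure_lt_roundsToOrthogonalize_le U hmeas hindep hunif)

end Probability

end Orthogonalization

lemma natCast_mul_inv_one_sub_eq_ofReal {K M : ℕ} (hMK : M < K) :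
    (M : ℝ≥0∞) * (1 - M * (K : ℝ≥0∞)⁻¹)⁻¹ = ENNReal.ofReal (M * K / (K - M)) := by
  have hq : (M : ℝ≥0∞) * (K : ℝ≥0∞)⁻¹ < 1 := by
    rw [← div_eq_mul_inv, ENNReal.div_lt_iff (by simp; omega) (by simp), one_mul]
    exact_mod_cast hMK
  have hKM : (K : ℝ) - M ≠ 0 := sub_ne_zero.mpr (by exact_mod_cast hMK.ne')
  have hK : (K : ℝ) ≠ 0 := by exact_mod_cast (Nat.zero_le M).trans_lt hMK |>.ne'
  rw [← ENNReal.ofReal_toReal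
      (ENNReal.mul_ne_top (by simp) (ENNReal.inv_ne_top.mpr (tsub_pos_of_lt hq).ne')),
    ENNReal.toReal_mul, ENNReal.toReal_inv, ENNReal.toReal_sub_of_le hq.le ENNReal.one_ne_top]
  simp only [ENNReal.toReal_natCast, ENNReal.toReal_mul, ENNReal.toReal_inv, ENNReal.toReal_one]
  field_simp

lemma mul_div_sub_le_of_lt {K M : ℕ} (hMK : M < K) :
    (M : ℝ) * K / (K - M) ≤ M * (K - 1) * (K + 1) / (K - M) := by
  refine div_le_div_of_nonneg_right ?_ (sub_nonneg.mpr (by exact_mod_cast hMK.le))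
  rcases Nat.eq_zero_or_pos M with rfl | hM
  · simp
  · have hK2 : (2 : ℝ) ≤ K := by exact_mod_cast (by omega : 2 ≤ K)
    nlinarith [mul_nonneg (mul_nonneg (Nat.cast_nonneg M) (sub_nonneg.mpr hK2)) (Nat.cast_nonneg K)]

open Orthogonalization in
theorem orthogonalization_expected_rounds_general
    {Ω : Type*} [MeasurableSpace Ω] (P : Measure Ω) [IsProbabilityMeasure P]
    (K M : ℕ) (hMK : M < K)
    (U : ℕ → Fin M → Ω → Fin K)
    (hmeas : ∀ n i, Measurable (U n i))
    (hindep : iIndepFun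
      (fun (p : ℕ × Fin M) ω => U p.1 p.2 ω) P)
    (hunif : ∀ n i (j : Fin K), P {ω | U n i ω = j} = (K : ENNReal)⁻¹) :
    ∫ ω, ((sInf {r : ℕ | ∀ i : Fin M, (assigned U r i ω).isSome} : ℕ) : ℝ) ∂P ≤
      (M : ℝ) * (K - 1) * (K + 1) / (K - M) := by
  calc ∫ ω, (roundsToOrthogonalize U ω : ℝ) ∂P
      = (∫⁻ ω, (roundsToOrthogonalize U ω : ℝ≥0∞) ∂P).toReal := by
        simpa using integral_toReal (μ := P)
          (measurable_from_nat.comp (measurable_roundsToOrthogonalize U hmeas)).aemeasurable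
          (ae_of_all _ fun _ => ENNReal.natCast_lt_top _)
    _ ≤ M * K / (K - M) :=
        ENNReal.toReal_le_of_le_ofReal (div_nonneg (by positivity) (by simp [hMK.le]))
          ((lintegral_roundsToOrthogonalize_le U hmeas hindep hunif).trans_eq
            (natCast_mul_inv_one_sub_eq_ofReal hMK))
    _ ≤ M * (K - 1) * (K + 1) / (K - M) := mul_div_sub_le_of_lt hMK

/-- Wang et al., Lemma 1: If in each round every unassigned player picks
uniformly at random among `K` arms (independently across rounds and players), and `s` is
the number of rounds needed until all `M < K` players are orthogonally assigned, then
`E[s] ≤ M(K-1)(K+1)/(K-M)`. -/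
theorem orthogonalization_expected_rounds
    {Ω : Type*} [MeasurableSpace Ω] (P : Measure Ω) [IsProbabilityMeasure P]
    (K M : ℕ) (hM : 0 < M) (hMK : M < K)
    (U : ℕ → Fin M → Ω → Fin K)
    (hmeas : ∀ n i, Measurable (U n i))
    (hindep : iIndepFun
      (fun (p : ℕ × Fin M) ω => U p.1 p.2 ω) P)
    (hunif : ∀ n i (j : Fin K), P {ω | U n i ω = j} = (K : ENNReal)⁻¹) :
    ∫ ω, ((sInf {r : ℕ | ∀ i : Fin M, (assigned U r i ω).isSome} : ℕ) : ℝ) ∂P ≤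
      (M : ℝ) * (K - 1) * (K + 1) / (K - M) :=
  orthogonalization_expected_rounds_general P K M hMK U hmeas hindep hunif
end

section
/- In the SIC-SDA accept/reject framework with capacity confidence bounds: suppose for all arms j, m_j^l <= m_j <= m_j^u and that g(k,j) = 1 implies mu_k > mu_j (high-confidence ordering is correct). If arm k satisfies sum over {j active : g(k,j) = 0} of m_j^u <= M_t (the number of active players), then arm k belongs to the true optimal support of the active sub-problem; i.e., the greedy optimal allocation of M_t players to active arms assigns a positive number of players to arm k. -/
/-- SIC-SDA accept correctness: With capacity bounds
`ml j ≤ m j ≤ mu j` for all arms and an indicator `g` such that `g k j = 1` implies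
`μ k > μ j` and `g k k = 0`, if the accept condition
`∑_{j : g k j = 0} mu j ≤ M_t` holds, then the greedy optimal allocation of `M_t`
players to the active arms (filling arms in decreasing order of mean up to capacity)
assigns a positive number of players to arm `k`. -/
theorem accept_condition_correct
    (K : ℕ) (μ : Fin K → ℝ) (m ml mu : Fin K → ℕ) (g : Fin K → Fin K → Bool)
    (Mt : ℕ) (k : Fin K)
    (hμinj : Function.Injective μ)
    (hm : ∀ j, 0 < m j)
    (hbounds : ∀ j, ml j ≤ m j ∧ m j ≤ mu j)
    (hg : ∀ k' j, g k' j = true → μ j < μ k')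
    (hgk : ∀ k', g k' k' = false)
    (hacc : ∑ j ∈ Finset.univ.filter (fun j => g k j = false), mu j ≤ Mt) :
    0 < min (m k) (Mt - ∑ j ∈ Finset.univ.filter (fun j => μ k < μ j), m j) := by
  have hS : ∑ j ∈ Finset.univ.filter (fun j => μ k < μ j), m j + m k ≤ Mt := by
    refine le_trans ?_ hacc
    have hsub : insert k (Finset.univ.filter (fun j => μ k < μ j)) ⊆
        Finset.univ.filter (fun j => g k j = false) := by
      intro j hj
      simp only [Finset.mem_insert, Finset.mem_filter, Finset.mem_univ, true_and] at hj ⊢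
      rcases hj with h | hj
      · subst h; exact hgk j
      · cases hgt : g k j
        · rfl
        · exact absurd (hg k j hgt) (not_lt.mpr hj.le)
    have hk : k ∉ Finset.univ.filter (fun j => μ k < μ j) := by simp
    calc ∑ j ∈ Finset.univ.filter (fun j => μ k < μ j), m j + m k
        = ∑ j ∈ insert k (Finset.univ.filter (fun j => μ k < μ j)), m j := by
          rw [Finset.sum_insert hk]; ring
      _ ≤ ∑ j ∈ insert k (Finset.univ.filter (fun j => μ k < μ j)), mu j :=
          Finset.sum_le_sum fun j _ => (hbounds j).2
      _ ≤ ∑ j ∈ Finset.univ.filter (fun j => g k j = false), mu j :=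
          Finset.sum_le_sum_of_subset hsub
  have hlt : ∑ j ∈ Finset.univ.filter (fun j => μ k < μ j), m j < Mt := by
    have := hm k; omega
  exact lt_min (hm k) (by omega)
end

section
/- In the SIC-SDA accept/reject framework: suppose for all arms j, m_j^l <= m_j and that g(j,k) = 1 implies mu_j > mu_k. If arm k satisfies sum over {j active : g(j,k) = 1} of m_j^l >= M_t, then arm k receives zero players in the greedy optimal allocation of M_t players to the active arms; i.e., arm k is truly suboptimal in the active sub-problem. -/
/-- SIC-SDA reject correctness: With capacity lower bounds `ml j ≤ m j`
and an indicator `g` such that `g j k = 1` implies `μ j > μ k`, if the reject condition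
`∑_{j : g j k = 1} ml j ≥ M_t` holds, then the greedy optimal allocation of `M_t`
players to the active arms (filling arms in decreasing order of mean up to capacity)
assigns zero players to arm `k`; i.e., arm `k` is truly suboptimal in the active
sub-problem. -/
theorem reject_condition_correct
    (K : ℕ) (μ : Fin K → ℝ) (m ml : Fin K → ℕ) (g : Fin K → Fin K → Bool)
    (Mt : ℕ) (k : Fin K)
    (hμinj : Function.Injective μ)
    (hm : ∀ j, 0 < m j)
    (hml : ∀ j, ml j ≤ m j)
    (hg : ∀ j, g j k = true → μ k < μ j)
    (hrej : Mt ≤ ∑ j ∈ Finset.univ.filter (fun j => g j k = true), ml j) :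
    min (m k) (Mt - ∑ j ∈ Finset.univ.filter (fun j => μ k < μ j), m j) = 0 := by
  have h1 : Mt ≤ ∑ j ∈ Finset.univ.filter (fun j => μ k < μ j), m j := by
    calc Mt ≤ ∑ j ∈ Finset.univ.filter (fun j => g j k = true), ml j := hrej
    _ ≤ ∑ j ∈ Finset.univ.filter (fun j => μ k < μ j), ml j :=
        Finset.sum_le_sum_of_subset_of_nonneg
          (fun j hj => Finset.mem_filter.2 ⟨Finset.mem_univ j, hg j (Finset.mem_filter.1 hj).2⟩)
          (fun _ _ _ => Nat.zero_le _)
    _ ≤ _ := Finset.sum_le_sum fun j _ => hml j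
  simp [Nat.sub_eq_zero_of_le h1]
end
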